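/- arXiv:math/0405396 — 4 statements merged into one kernel-verified Lean document; each statement's English description precedes it below -/
import Mathlib

section
/- Every element u of the Vershik group V_n admits a Knuth–Bendix normal form: there exist k ≥ 0, indices i_1, …, i_k ∈ {1, …, n} and nonzero integers μ_1, …, μ_k such that u = x_{i_1}^{μ_1} x_{i_2}^{μ_2} ⋯ x_{i_k}^{μ_k}, the total exponent sum satisfies Σ_{j=1}^{k} |μ_j| = l(u), and for each j < k the index sequence satisfies: (i) if i_j = 1 then i_{j+1} > 1; (ii) if i_j = m with 1 < m < n then i_{j+1} = m − 1 or i_{j+1} > m; (iii) if i_j = n then i_{j+1} = n − 1. -/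
/-- Defining relations of the Vershik group `V n`: generators `x_i` and `x_j`
(0-indexed by `Fin n`) commute whenever `|i - j| ≥ 2`. -/
def VershikRels (n : ℕ) : Set (FreeGroup (Fin n)) :=
  {r | ∃ i j : Fin n, 2 ≤ |(i : ℤ) - (j : ℤ)| ∧
      r = FreeGroup.of i * FreeGroup.of j * (FreeGroup.of i)⁻¹ * (FreeGroup.of j)⁻¹}

/-- The Vershik group of rank `n`. -/
abbrev Vershik (n : ℕ) : Type := PresentedGroup (VershikRels n)

/-- The generator `x_{i+1}` of the Vershik group (0-indexed by `Fin n`). -/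
def xGen (n : ℕ) (i : Fin n) : Vershik n := PresentedGroup.of i

/-- A letter: a generator or the inverse of a generator. -/
def IsLetter (n : ℕ) (g : Vershik n) : Prop :=
  ∃ i : Fin n, g = xGen n i ∨ g = (xGen n i)⁻¹

/-- The length `l(u)`: the minimal number of letters (generators or inverses of
generators) needed to write `u` as a product. -/
noncomputable def vLength {n : ℕ} (u : Vershik n) : ℕ :=
  sInf {k | ∃ L : List (Vershik n), L.length = k ∧ (∀ g ∈ L, IsLetter n g) ∧ L.prod = u}

/-- Conditions (i)–(iii) on the (1-indexed) index sequence of an expression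
`x_{i_1}^{μ_1} ⋯ x_{i_k}^{μ_k}`, recorded as a list of pairs (index, exponent):
for consecutive 1-based generator indices `a = i_j` and `b = i_{j+1}`:
(i) if `a = 1` then `b > 1`; (ii) if `1 < a < n` then `b = a - 1` or `b > a`;
(iii) if `a = n` then `b = n - 1`. -/
def KBIndexConds (n : ℕ) (L : List (Fin n × ℤ)) : Prop :=
  ∀ j : ℕ, ∀ hj : j + 1 < L.length,
    (((L[j]'(Nat.lt_of_succ_lt hj)).1 : ℕ) + 1 = 1 → 1 < ((L[j+1]'hj).1 : ℕ) + 1) ∧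
    (1 < ((L[j]'(Nat.lt_of_succ_lt hj)).1 : ℕ) + 1 →
      ((L[j]'(Nat.lt_of_succ_lt hj)).1 : ℕ) + 1 < n →
      (((L[j+1]'hj).1 : ℕ) + 1 = ((L[j]'(Nat.lt_of_succ_lt hj)).1 : ℕ) + 1 - 1 ∨
        ((L[j]'(Nat.lt_of_succ_lt hj)).1 : ℕ) + 1 < ((L[j+1]'hj).1 : ℕ) + 1)) ∧
    (((L[j]'(Nat.lt_of_succ_lt hj)).1 : ℕ) + 1 = n → ((L[j+1]'hj).1 : ℕ) + 1 = n - 1)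

/-- `L` (a list of pairs `(i_j, μ_j)` of a generator index and a nonzero exponent)
is a Knuth–Bendix normal form of `u ∈ V_n`: `u = x_{i_1}^{μ_1} ⋯ x_{i_k}^{μ_k}`,
all `μ_j ≠ 0`, `Σ |μ_j| = l(u)`, and the index sequence satisfies (i)–(iii). -/
def IsKBNormalForm (n : ℕ) (u : Vershik n) (L : List (Fin n × ℤ)) : Prop :=
  (∀ p ∈ L, p.2 ≠ 0) ∧
  (L.map fun p => xGen n p.1 ^ p.2).prod = u ∧
  (L.map fun p => p.2.natAbs).sum = vLength u ∧
  KBIndexConds n L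

/-!
Write `u` as a geodesic word and group it into syllables `x_i^μ`. The rewrites
`x_a^μ x_a^ν → x_a^{μ+ν}` and, for commuting generators with `b + 1 < a`,
`x_a^μ x_b^ν → x_b^ν x_a^μ` preserve the element, do not increase `Σ |μ|`, and decrease the
number of syllables plus the number of index inversions, so they terminate. By minimality of the
geodesic the weight stays `l(u)`, and in a syllable list to which no rewrite applies each index
is followed by its predecessor or by a larger index, which is exactly (i)–(iii).
-/

theorem exists_isFixedPt_of_measure_lt {α : Type*} {f : α → α} (m : α → ℕ)
    (hm : ∀ x, f x ≠ x → m (f x) < m x) {P : α → Prop} (hP : ∀ x, P x → P (f x))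
    {x : α} (hx : P x) : ∃ y, P y ∧ Function.IsFixedPt f y := by
  induction x using (measure m).wf.induction with
  | _ x ih =>
    by_cases hfx : f x = x
    · exact ⟨x, hx, hfx⟩
    · exact ih (f x) (hm x hfx) (hP x hx)

namespace Vershik

variable {n : ℕ}

theorem xGen_commute {i j : Fin n} (h : 2 ≤ |(i : ℤ) - (j : ℤ)|) :
    Commute (xGen n i) (xGen n j) := by
  rw [← commutatorElement_eq_one_iff_commute]
  have hrel : PresentedGroup.mk (VershikRels n)
      (FreeGroup.of i * FreeGroup.of j * (FreeGroup.of i)⁻¹ * (FreeGroup.of j)⁻¹) = 1 :=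
    (QuotientGroup.eq_one_iff _).mpr (Subgroup.subset_normalClosure ⟨i, j, h, rfl⟩)
  simpa [commutatorElement_def, xGen, PresentedGroup.of] using hrel

theorem xGen_commute_of_add_one_lt {i j : Fin n} (h : (j : ℕ) + 1 < i) :
    Commute (xGen n i) (xGen n j) :=
  xGen_commute (by rw [abs_of_nonneg (by omega)]; omega)

theorem IsLetter.exists_zpow {g : Vershik n} (hg : IsLetter n g) :
    ∃ p : Fin n × ℤ, p.2.natAbs = 1 ∧ xGen n p.1 ^ p.2 = g := by
  obtain ⟨i, rfl | rfl⟩ := hg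
  · exact ⟨(i, 1), rfl, zpow_one _⟩
  · exact ⟨(i, -1), rfl, zpow_neg_one _⟩

theorem exists_letters_prod_eq (u : Vershik n) :
    ∃ L : List (Vershik n), (∀ g ∈ L, IsLetter n g) ∧ L.prod = u := by
  have hu : u ∈ (Subgroup.closure (Set.range (xGen n))).toSubmonoid := by
    rw [Subgroup.mem_toSubmonoid, show xGen n = PresentedGroup.of from rfl,
      PresentedGroup.closure_range_of]
    trivial
  rw [Subgroup.closure_toSubmonoid] at hu
  obtain ⟨L, hL, rfl⟩ := Submonoid.exists_list_of_mem_closure hu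
  refine ⟨L, fun g hg => ?_, rfl⟩
  rcases hL g hg with ⟨i, rfl⟩ | ⟨i, hi⟩
  · exact ⟨i, Or.inl rfl⟩
  · exact ⟨i, Or.inr (by rw [hi, inv_inv])⟩

theorem exists_letters_length_eq_vLength (u : Vershik n) :
    ∃ L : List (Vershik n), L.length = vLength u ∧ (∀ g ∈ L, IsLetter n g) ∧ L.prod = u := by
  obtain ⟨L, hL⟩ := exists_letters_prod_eq u
  exact Nat.sInf_mem (s := {k | ∃ L : List (Vershik n), L.length = k ∧ _}) ⟨_, L, rfl, hL⟩

def syllableProd (L : List (Fin n × ℤ)) : Vershik n := (L.map fun p => xGen n p.1 ^ p.2).prod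

def syllableWeight (L : List (Fin n × ℤ)) : ℕ := (L.map fun p => p.2.natAbs).sum

@[simp]
theorem syllableProd_cons (p : Fin n × ℤ) (L : List (Fin n × ℤ)) :
    syllableProd (p :: L) = xGen n p.1 ^ p.2 * syllableProd L :=
  List.prod_cons

@[simp]
theorem syllableWeight_cons (p : Fin n × ℤ) (L : List (Fin n × ℤ)) :
    syllableWeight (p :: L) = p.2.natAbs + syllableWeight L :=
  List.sum_cons

def syllableLetters (p : Fin n × ℤ) : List (Vershik n) :=
  List.replicate p.2.natAbs (if 0 ≤ p.2 then xGen n p.1 else (xGen n p.1)⁻¹)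

theorem prod_syllableLetters (p : Fin n × ℤ) : (syllableLetters p).prod = xGen n p.1 ^ p.2 := by
  rw [syllableLetters, List.prod_replicate]
  split_ifs with h
  · rw [← zpow_natCast, Int.natAbs_of_nonneg h]
  · rw [inv_pow, ← zpow_natCast, ← zpow_neg, Int.ofNat_natAbs_of_nonpos (by omega), neg_neg]

theorem isLetter_of_mem_syllableLetters {p : Fin n × ℤ} {g : Vershik n}
    (hg : g ∈ syllableLetters p) : IsLetter n g := by
  rw [List.eq_of_mem_replicate hg]
  exact ⟨p.1, by split_ifs <;> simp⟩

theorem vLength_syllableProd_le (L : List (Fin n × ℤ)) :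
    vLength (syllableProd L) ≤ syllableWeight L := by
  refine Nat.sInf_le ⟨L.flatMap syllableLetters, ?_, ?_, ?_⟩
  · simp [List.length_flatMap, syllableLetters, syllableWeight]
  · simp only [List.mem_flatMap]
    rintro g ⟨p, -, hg⟩
    exact isLetter_of_mem_syllableLetters hg
  · simp [List.flatMap, List.prod_flatten, Function.comp_def, prod_syllableLetters, syllableProd]

theorem exists_syllables_of_letters (L : List (Vershik n)) (hL : ∀ g ∈ L, IsLetter n g) :
    ∃ B : List (Fin n × ℤ), (∀ p ∈ B, p.2 ≠ 0) ∧ syllableProd B = L.prod ∧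
      syllableWeight B = L.length := by
  induction L with
  | nil => exact ⟨[], by simp, rfl, rfl⟩
  | cons g L ih =>
    obtain ⟨B, hB0, hBprod, hBweight⟩ := ih fun g' hg' => hL g' (List.mem_cons_of_mem _ hg')
    obtain ⟨p, hp, rfl⟩ := IsLetter.exists_zpow (hL g List.mem_cons_self)
    exact ⟨p :: B, List.forall_mem_cons.2 ⟨by omega, hB0⟩, by simp [hBprod],
      by simp [hp, hBweight, add_comm]⟩

theorem exists_syllables_weight_eq_vLength (u : Vershik n) :
    ∃ B : List (Fin n × ℤ), (∀ p ∈ B, p.2 ≠ 0) ∧ syllableProd B = u ∧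
      syllableWeight B = vLength u := by
  obtain ⟨L, hlen, hL, rfl⟩ := exists_letters_length_eq_vLength u
  rw [← hlen]
  exact exists_syllables_of_letters L hL

/-- The Knuth–Bendix rewriting system of `V_n` on syllable lists, applied once at the leftmost
place where a rule applies. -/
def kbStep : List (Fin n × ℤ) → List (Fin n × ℤ)
  | [] => []
  | [p] => [p]
  | (a, μ) :: (b, ν) :: L =>
    if a = b then (if μ + ν = 0 then L else (a, μ + ν) :: L)
    else if (b : ℕ) + 1 < a then (b, ν) :: (a, μ) :: L
    else (a, μ) :: kbStep ((b, ν) :: L)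

def inversions : List (Fin n × ℤ) → ℕ
  | [] => 0
  | p :: L => L.countP (fun q => q.1 < p.1) + inversions L

theorem countP_kbStep_le (P : Fin n → Bool) (L : List (Fin n × ℤ)) :
    (kbStep L).countP (fun q => P q.1) ≤ L.countP (fun q => P q.1) := by
  induction L using kbStep.induct with
  | case1 | case2 => simp [kbStep]
  | case3 μ b ν L hzero =>
    simp only [kbStep, if_pos hzero, if_true, List.countP_cons]
    omega
  | case4 μ b ν L hzero =>
    simp [kbStep, hzero, List.countP_cons]
  | case5 a μ b ν L hab hswap =>
    simp only [kbStep, if_neg hab, if_pos hswap, List.countP_cons]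
    omega
  | case6 a μ b ν L hab hswap ih =>
    simp only [kbStep, if_neg hab, if_neg hswap, List.countP_cons] at ih ⊢
    omega

theorem length_add_inversions_kbStep_lt {L : List (Fin n × ℤ)} (h : kbStep L ≠ L) :
    (kbStep L).length + inversions (kbStep L) < L.length + inversions L := by
  induction L using kbStep.induct with
  | case1 | case2 => simp [kbStep] at h
  | case3 μ b ν L hzero | case4 μ b ν L hzero =>
    simp [kbStep, hzero, inversions]
    omega
  | case5 a μ b ν L hab hswap =>
    have hba : b < a := Fin.lt_def.2 (by omega)
    have hab' : ¬ a < b := fun h => by rw [Fin.lt_def] at h; omega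
    simp [kbStep, hab, hswap, inversions, hba, hab']
    omega
  | case6 a μ b ν L hab hswap ih =>
    rw [kbStep, if_neg hab, if_neg hswap] at h ⊢
    have hlt := ih fun he => h (by rw [he])
    have hcount := countP_kbStep_le (fun q => decide (q < a)) ((b, ν) :: L)
    simp only [inversions, List.length_cons] at hlt hcount ⊢
    omega

theorem syllableProd_kbStep (L : List (Fin n × ℤ)) : syllableProd (kbStep L) = syllableProd L := by
  induction L using kbStep.induct with
  | case1 | case2 => rfl
  | case3 μ b ν L hzero =>
    simp [kbStep, hzero, ← mul_assoc, ← zpow_add]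
  | case4 μ b ν L hzero =>
    simp [kbStep, hzero, ← mul_assoc, ← zpow_add]
  | case5 a μ b ν L hab hswap =>
    simp only [kbStep, if_neg hab, if_pos hswap, syllableProd_cons, ← mul_assoc,
      ((xGen_commute_of_add_one_lt hswap).zpow_zpow μ ν).eq]
  | case6 a μ b ν L hab hswap ih =>
    simp only [kbStep, if_neg hab, if_neg hswap, syllableProd_cons] at ih ⊢
    rw [ih]

theorem syllableWeight_kbStep_le (L : List (Fin n × ℤ)) :
    syllableWeight (kbStep L) ≤ syllableWeight L := by
  induction L using kbStep.induct with
  | case1 | case2 => rfl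
  | case3 μ b ν L hzero | case4 μ b ν L hzero =>
    simp [kbStep, hzero]
    omega
  | case5 a μ b ν L hab hswap =>
    simp [kbStep, hab, hswap]
    omega
  | case6 a μ b ν L hab hswap ih =>
    simp only [kbStep, if_neg hab, if_neg hswap, syllableWeight_cons] at ih ⊢
    omega

theorem ne_zero_of_mem_kbStep {L : List (Fin n × ℤ)} (h : ∀ p ∈ L, p.2 ≠ 0) :
    ∀ p ∈ kbStep L, p.2 ≠ 0 := by
  induction L using kbStep.induct with
  | case1 | case2 => exact h
  | case3 μ b ν L hzero | case4 μ b ν L hzero =>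
    simp only [List.forall_mem_cons] at h
    simpa [kbStep, hzero] using h.2.2
  | case5 a μ b ν L hab hswap =>
    simp only [kbStep, if_neg hab, if_pos hswap, List.forall_mem_cons] at h ⊢
    exact ⟨h.2.1, h.1, h.2.2⟩
  | case6 a μ b ν L hab hswap ih =>
    simp only [kbStep, if_neg hab, if_neg hswap, List.forall_mem_cons] at h ih ⊢
    exact ⟨h.1, ih h.2⟩

/-- Conditions (i)–(iii) for one consecutive pair, in 0-based indices. -/
def KBAdjacent (p q : Fin n × ℤ) : Prop := (q.1 : ℕ) + 1 = p.1 ∨ p.1 < q.1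

theorem isChain_kbAdjacent_of_kbStep_eq {L : List (Fin n × ℤ)} (h : kbStep L = L) :
    L.IsChain KBAdjacent := by
  induction L using kbStep.induct with
  | case1 => exact List.isChain_nil
  | case2 p => exact List.isChain_singleton p
  | case3 μ b ν L hzero =>
    have := congrArg List.length h
    simp [kbStep, hzero] at this
    omega
  | case4 μ b ν L hzero =>
    have := congrArg List.length h
    simp [kbStep, hzero] at this
  | case5 a μ b ν L hab hswap =>
    simp only [kbStep, if_neg hab, if_pos hswap, List.cons.injEq, Prod.mk.injEq] at h
    exact absurd h.1.1.symm hab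
  | case6 a μ b ν L hab hswap ih =>
    simp only [kbStep, if_neg hab, if_neg hswap, List.cons.injEq, true_and] at h
    refine List.isChain_cons_cons.2 ⟨?_, ih h⟩
    have : (a : ℕ) ≠ b := Fin.val_ne_of_ne hab
    simp only [KBAdjacent, Fin.lt_def]
    omega

theorem kbIndexConds_of_isChain {L : List (Fin n × ℤ)} (h : L.IsChain KBAdjacent) :
    KBIndexConds n L := by
  intro j hj
  have hadj := List.isChain_iff_getElem.1 h j hj
  have ha := (L[j]'(Nat.lt_of_succ_lt hj)).1.isLt
  have hb := (L[j + 1]'hj).1.isLt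
  simp only [KBAdjacent, Fin.lt_def] at hadj
  omega

end Vershik

/-- Every element of the Vershik group `V_n` admits a Knuth–Bendix normal form. -/
theorem vershik_kb_normal_form_exists (n : ℕ) (u : Vershik n) :
    ∃ L : List (Fin n × ℤ), IsKBNormalForm n u L := by
  open Vershik in
  obtain ⟨B, hB⟩ := exists_syllables_weight_eq_vLength u
  obtain ⟨L, ⟨hL0, hLprod, hLweight⟩, hfix⟩ :=
    exists_isFixedPt_of_measure_lt (fun L => L.length + inversions L)
      (fun _ => length_add_inversions_kbStep_lt)
      (P := fun L => (∀ p ∈ L, p.2 ≠ 0) ∧ syllableProd L = u ∧ syllableWeight L ≤ vLength u)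
      (fun L ⟨h0, hprod, hweight⟩ => ⟨ne_zero_of_mem_kbStep h0,
        (syllableProd_kbStep L).trans hprod, (syllableWeight_kbStep_le L).trans hweight⟩)
      ⟨hB.1, hB.2.1, hB.2.2.le⟩
  exact ⟨L, hL0, hLprod, le_antisymm hLweight (hLprod ▸ vLength_syllableProd_le L),
    kbIndexConds_of_isChain (isChain_kbAdjacent_of_kbStep_eq hfix)⟩
end

section
/- The normal form solves the word problem in the Vershik group V_n: two words in the generators x_1, …, x_n and their inverses represent the same element of V_n if and only if their Knuth–Bendix normal forms coincide, i.e., if and only if the unique length-minimal expressions x_{i_1}^{μ_1} ⋯ x_{i_k}^{μ_k} satisfying conditions (i)–(iii) associated to the two words have the same sequence of pairs (i_1, μ_1), …, (i_k, μ_k). -/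
/-- The canonical projection from the free group on the generators to the
Vershik group, sending a word to the element it represents. -/
def vershikMk (n : ℕ) : FreeGroup (Fin n) →* Vershik n :=
  QuotientGroup.mk' (Subgroup.normalClosure (VershikRels n))

/-!
Van der Waerden's trick. `V_n` acts on the set of normal words: `x_i^ε` acts by `leftMul i ε`,
which moves the block `x_i^ε` to the right past the blocks of the generators `x_j` with
`j + 2 ≤ i` (these commute with `x_i`) until it merges with a block of `x_i` or may stand in front
of the next block. The defining relations hold because insertions of far-apart generators commute.
A normal word is the image of the empty word under the element it represents, so two normal words
representing the same element coincide.
-/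

namespace Vershik

variable {n : ℕ}

/-- Conditions (i)–(iii) for the 0-indexed generators: `x_j` may directly follow `x_i`. -/
def CanPrecede (i j : Fin n) : Prop := (j : ℕ) + 1 = i ∨ (i : ℕ) < j

instance : DecidableRel (CanPrecede (n := n)) :=
  fun _ _ => inferInstanceAs (Decidable (_ ∨ _))

lemma CanPrecede.ne {i j : Fin n} (h : CanPrecede i j) : i ≠ j := by
  rintro rfl
  unfold CanPrecede at h
  omega

lemma add_two_le_of_not_canPrecede {i j : Fin n} (hij : i ≠ j) (h : ¬CanPrecede i j) :
    (j : ℕ) + 2 ≤ i := by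
  have := Fin.val_ne_of_ne hij
  unfold CanPrecede at h
  omega

lemma kbIndexConds_iff_isChain {L : List (Fin n × ℤ)} :
    KBIndexConds n L ↔ L.IsChain (fun p q => CanPrecede p.1 q.1) := by
  rw [List.isChain_iff_getElem]
  refine forall_congr' fun j => forall_congr' fun hj => ?_
  have := (L[j]).1.is_lt
  have := (L[j + 1]).1.is_lt
  unfold CanPrecede
  omega

def IsNormalWord (L : List (Fin n × ℤ)) : Prop :=
  (∀ p ∈ L, p.2 ≠ 0) ∧ L.IsChain (fun p q => CanPrecede p.1 q.1)

lemma IsNormalWord.nil : IsNormalWord ([] : List (Fin n × ℤ)) := ⟨by simp, .nil⟩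

lemma IsNormalWord.of_cons {p : Fin n × ℤ} {L : List (Fin n × ℤ)}
    (h : IsNormalWord (p :: L)) : IsNormalWord L :=
  ⟨fun q hq => h.1 q (List.mem_cons_of_mem _ hq), (List.isChain_cons.mp h.2).2⟩

lemma _root_.IsKBNormalForm.isNormalWord {u : Vershik n} {L : List (Fin n × ℤ)}
    (h : IsKBNormalForm n u L) : IsNormalWord L :=
  ⟨h.1, kbIndexConds_iff_isChain.mp h.2.2.2⟩

def consNonzero (p : Fin n × ℤ) (L : List (Fin n × ℤ)) : List (Fin n × ℤ) :=
  if p.2 = 0 then L else p :: L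

def leftMul (i : Fin n) (ε : ℤ) : List (Fin n × ℤ) → List (Fin n × ℤ)
  | [] => consNonzero (i, ε) []
  | (j, μ) :: T =>
    if i = j then consNonzero (i, ε + μ) T
    else if CanPrecede i j then consNonzero (i, ε) ((j, μ) :: T)
    else (j, μ) :: leftMul i ε T

lemma leftMul_of_canPrecede {i : Fin n} {ε : ℤ} {L : List (Fin n × ℤ)}
    (h : ∀ q ∈ L.head?, CanPrecede i q.1) : leftMul i ε L = consNonzero (i, ε) L := by
  match L, h with
  | [], _ => rfl
  | (k, ν) :: T, h =>
    have hik : CanPrecede i k := h _ rfl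
    simp [leftMul, hik.ne, hik]

lemma leftMul_zero (i : Fin n) {L : List (Fin n × ℤ)} (hL : ∀ p ∈ L, p.2 ≠ 0) :
    leftMul i 0 L = L := by
  induction L with
  | nil => rfl
  | cons p T ih =>
    obtain ⟨j, μ⟩ := p
    have hμ : μ ≠ 0 := hL _ List.mem_cons_self
    have := ih fun q hq => hL q (List.mem_cons_of_mem _ hq)
    by_cases hij : i = j
    · subst hij; simp [leftMul, consNonzero, hμ]
    · by_cases h : CanPrecede i j <;> simp [leftMul, consNonzero, hij, h, this]

lemma leftMul_leftMul (i : Fin n) (ε δ : ℤ) {L : List (Fin n × ℤ)} (hL : IsNormalWord L) :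
    leftMul i ε (leftMul i δ L) = leftMul i (ε + δ) L := by
  induction L with
  | nil => by_cases hδ : δ = 0 <;> simp [leftMul, consNonzero, hδ]
  | cons p T ih =>
    obtain ⟨j, μ⟩ := p
    obtain ⟨hhead, hT⟩ := List.isChain_cons.mp hL.2
    by_cases hij : i = j
    · subst hij
      by_cases hδμ : δ + μ = 0
      · have hT' : leftMul i ε T = consNonzero (i, ε) T := leftMul_of_canPrecede hhead
        simpa [leftMul, consNonzero, hδμ, add_assoc] using hT'
      · simp [leftMul, consNonzero, hδμ, add_assoc]
    · by_cases h : CanPrecede i j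
      · by_cases hδ : δ = 0 <;> simp [leftMul, consNonzero, hij, h, hδ]
      · simp [leftMul, hij, h, ih hL.of_cons]

lemma head?_consNonzero_mem {p q : Fin n × ℤ} {L : List (Fin n × ℤ)}
    (h : q ∈ (consNonzero p L).head?) : q = p ∨ q ∈ L.head? := by
  unfold consNonzero at h
  split_ifs at h <;> simp_all

lemma IsNormalWord.consNonzero {p : Fin n × ℤ} {L : List (Fin n × ℤ)} (hL : IsNormalWord L)
    (h : ∀ q ∈ L.head?, CanPrecede p.1 q.1) : IsNormalWord (consNonzero p L) := by
  unfold Vershik.consNonzero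
  split_ifs with hp
  · exact hL
  · exact ⟨by simpa [hp] using hL.1, List.isChain_cons.mpr ⟨h, hL.2⟩⟩

lemma canPrecede_head_leftMul {i j : Fin n} (hji : (j : ℕ) + 2 ≤ i) (ε : ℤ)
    {L : List (Fin n × ℤ)} (hL : L.IsChain (fun p q => CanPrecede p.1 q.1))
    (h : ∀ q ∈ L.head?, CanPrecede j q.1) : ∀ q ∈ (leftMul i ε L).head?, CanPrecede j q.1 := by
  have hji' : CanPrecede j i := Or.inr (by omega)
  match L, hL, h with
  | [], _, _ =>
    intro q hq
    rcases head?_consNonzero_mem hq with rfl | hq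
    · exact hji'
    · simp at hq
  | (k, ν) :: T, hL, h =>
    obtain ⟨hhead, -⟩ := List.isChain_cons.mp hL
    intro q hq
    simp only [leftMul] at hq
    split_ifs at hq with hik hik'
    · rcases head?_consNonzero_mem hq with rfl | hq
      · exact hji'
      · subst hik
        have : CanPrecede i q.1 := hhead q hq
        unfold CanPrecede at this ⊢
        omega
    · rcases head?_consNonzero_mem hq with rfl | hq
      · exact hji'
      · exact h q hq
    · exact h q hq

lemma IsNormalWord.leftMul (i : Fin n) (ε : ℤ) {L : List (Fin n × ℤ)} (hL : IsNormalWord L) :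
    IsNormalWord (leftMul i ε L) := by
  induction L with
  | nil => exact IsNormalWord.nil.consNonzero (by simp)
  | cons p T ih =>
    obtain ⟨k, ν⟩ := p
    obtain ⟨hhead, hT⟩ := List.isChain_cons.mp hL.2
    simp only [Vershik.leftMul]
    split_ifs with hik hik'
    · subst hik
      exact hL.of_cons.consNonzero hhead
    · exact hL.consNonzero (by simpa using hik')
    · have ihT := ih hL.of_cons
      refine ⟨List.forall_mem_cons.mpr ⟨hL.1 _ List.mem_cons_self, ihT.1⟩,
        List.isChain_cons.mpr ⟨?_, ihT.2⟩⟩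
      exact canPrecede_head_leftMul (add_two_le_of_not_canPrecede hik hik') ε hT hhead

lemma leftMul_comm {i j : Fin n} (hji : (j : ℕ) + 2 ≤ i) (ε δ : ℤ) {L : List (Fin n × ℤ)}
    (hL : IsNormalWord L) : leftMul i ε (leftMul j δ L) = leftMul j δ (leftMul i ε L) := by
  by_cases hε : ε = 0
  · subst hε
    rw [leftMul_zero i (hL.leftMul j δ).1, leftMul_zero i hL.1]
  by_cases hδ : δ = 0
  · subst hδ
    rw [leftMul_zero j (hL.leftMul i ε).1, leftMul_zero j hL.1]
  have hij : i ≠ j := by rintro rfl; omega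
  have hji' : CanPrecede j i := Or.inr (by omega)
  have hij' : ¬CanPrecede i j := by unfold CanPrecede; omega
  induction L with
  | nil => simp [leftMul, consNonzero, hε, hδ, hij, hij.symm, hji', hij']
  | cons p T ih =>
    obtain ⟨k, ν⟩ := p
    obtain ⟨hhead, hT⟩ := List.isChain_cons.mp hL.2
    by_cases hki : k = i
    · subst hki
      have hjT : ∀ q ∈ T.head?, CanPrecede j q.1 := fun q hq => by
        have : CanPrecede k q.1 := hhead q hq
        unfold CanPrecede at this ⊢
        omega
      rw [leftMul_of_canPrecede (L := (k, ν) :: T) (by simpa using hji')]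
      by_cases hεν : ε + ν = 0
      · simp [leftMul, consNonzero, hδ, hij, hij', hεν, leftMul_of_canPrecede hjT]
      · simp [leftMul, consNonzero, hδ, hij, hij', hεν, hji', hij.symm]
    by_cases hkj : k = j
    · subst hkj
      by_cases hδν : δ + ν = 0 <;> simp [leftMul, consNonzero, hij, hij', hδν]
    by_cases hjk : CanPrecede j k
    · have hjL : ∀ q ∈ (leftMul i ε ((k, ν) :: T)).head?, CanPrecede j q.1 :=
        canPrecede_head_leftMul hji ε hL.2 (by simpa using hjk)
      rw [leftMul_of_canPrecede hjL, leftMul_of_canPrecede (L := (k, ν) :: T) (by simpa using hjk)]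
      simp [leftMul, consNonzero, hδ, hij, hij']
    · have hik : ¬CanPrecede i k := by
        have := add_two_le_of_not_canPrecede (Ne.symm hkj) hjk
        unfold CanPrecede; omega
      simp [leftMul, Ne.symm hki, Ne.symm hkj, hik, hjk, ih hL.of_cons]

abbrev NormalWord (n : ℕ) : Type := {L : List (Fin n × ℤ) // IsNormalWord L}

def NormalWord.nil : NormalWord n := ⟨[], IsNormalWord.nil⟩

def leftMulPerm (i : Fin n) : Equiv.Perm (NormalWord n) where
  toFun L := ⟨leftMul i 1 L.1, L.2.leftMul i 1⟩
  invFun L := ⟨leftMul i (-1) L.1, L.2.leftMul i (-1)⟩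
  left_inv L := Subtype.ext <| by simp [leftMul_leftMul i _ _ L.2, leftMul_zero i L.2.1]
  right_inv L := Subtype.ext <| by simp [leftMul_leftMul i _ _ L.2, leftMul_zero i L.2.1]

lemma leftMulPerm_zpow_apply (i : Fin n) (μ : ℤ) (L : NormalWord n) :
    ((leftMulPerm i ^ μ) L).1 = leftMul i μ L.1 := by
  induction μ generalizing L with
  | zero => exact (leftMul_zero i L.2.1).symm
  | succ μ ih =>
    rw [zpow_add_one, Equiv.Perm.mul_apply, ih]
    exact leftMul_leftMul i _ _ L.2
  | pred μ ih =>
    rw [zpow_sub_one, Equiv.Perm.mul_apply, ih]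
    exact leftMul_leftMul i _ _ L.2

lemma commute_leftMulPerm {i j : Fin n} (hij : 2 ≤ |(i : ℤ) - j|) :
    Commute (leftMulPerm i) (leftMulPerm j) := by
  wlog hji : (j : ℕ) + 2 ≤ i generalizing i j
  · refine (this (by rwa [abs_sub_comm]) ?_).symm
    rcases abs_cases ((i : ℤ) - j) with ⟨h, _⟩ | ⟨h, _⟩ <;> omega
  exact Equiv.ext fun L => Subtype.ext (leftMul_comm hji 1 1 L.2)

def toPerm : Vershik n →* Equiv.Perm (NormalWord n) :=
  PresentedGroup.toGroup (f := leftMulPerm) <| by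
    rintro - ⟨i, j, hij, rfl⟩
    simpa [← commutatorElement_def, commutatorElement_eq_one_iff_commute]
      using commute_leftMulPerm hij

lemma toPerm_xGen_zpow_apply (i : Fin n) (μ : ℤ) (L : NormalWord n) :
    (toPerm (xGen n i ^ μ) L).1 = leftMul i μ L.1 := by
  rw [map_zpow, xGen, toPerm, PresentedGroup.toGroup.of, leftMulPerm_zpow_apply]

lemma toPerm_prod_apply_nil {L : List (Fin n × ℤ)} (hL : IsNormalWord L) :
    (toPerm (L.map fun p => xGen n p.1 ^ p.2).prod NormalWord.nil).1 = L := by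
  induction L with
  | nil => rfl
  | cons p T ih =>
    have hT : toPerm (T.map fun p => xGen n p.1 ^ p.2).prod NormalWord.nil = ⟨T, hL.of_cons⟩ :=
      Subtype.ext (ih hL.of_cons)
    rw [List.map_cons, List.prod_cons, map_mul, Equiv.Perm.mul_apply, hT,
      toPerm_xGen_zpow_apply, leftMul_of_canPrecede (List.isChain_cons.mp hL.2).1]
    simp [consNonzero, hL.1 p List.mem_cons_self]

lemma IsNormalWord.eq_of_prod_eq {L₁ L₂ : List (Fin n × ℤ)} (h₁ : IsNormalWord L₁)
    (h₂ : IsNormalWord L₂)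
    (h : (L₁.map fun p => xGen n p.1 ^ p.2).prod = (L₂.map fun p => xGen n p.1 ^ p.2).prod) :
    L₁ = L₂ := by
  rw [← toPerm_prod_apply_nil h₁, ← toPerm_prod_apply_nil h₂, h]

end Vershik

/-- The normal form solves the word problem in the Vershik group `V_n`: two words
in the generators and their inverses represent the same element of `V_n` if and
only if their Knuth–Bendix normal forms coincide. -/
theorem vershik_word_problem (n : ℕ) (w₁ w₂ : FreeGroup (Fin n))
    (L₁ L₂ : List (Fin n × ℤ))
    (hL₁ : IsKBNormalForm n (vershikMk n w₁) L₁)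
    (hL₂ : IsKBNormalForm n (vershikMk n w₂) L₂) :
    vershikMk n w₁ = vershikMk n w₂ ↔ L₁ = L₂ := by
  refine ⟨fun h => ?_, fun h => ?_⟩
  · refine hL₁.isNormalWord.eq_of_prod_eq hL₂.isNormalWord ?_
    rw [hL₁.2.1, hL₂.2.1, h]
  · rw [← hL₁.2.1, ← hL₂.2.1, h]
end

section
/- Parabolic subgroups of Vershik groups are naturally isomorphic to the corresponding presented groups: for any subset Y ⊆ {1, …, n}, let V(Y) be the group presented by generators {y_i : i ∈ Y} and relations y_i y_j = y_j y_i for all i, j ∈ Y with |i − j| ≥ 2. Then the homomorphism V(Y) → V_n sending y_i to x_i is injective; in particular, V(Y) is isomorphic to the subgroup of V_n generated by {x_i : i ∈ Y}. -/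
/-- Defining relations of the presented group `V(Y)` for a subset `Y` of the
generator indices of `V_n`: the generators `y_i, y_j` (for `i, j ∈ Y`) commute
whenever `|i - j| ≥ 2`. -/
def VershikSubRels (n : ℕ) (Y : Set (Fin n)) : Set (FreeGroup Y) :=
  {r | ∃ i j : Y, 2 ≤ |((i : Fin n) : ℤ) - ((j : Fin n) : ℤ)| ∧
      r = FreeGroup.of i * FreeGroup.of j * (FreeGroup.of i)⁻¹ * (FreeGroup.of j)⁻¹}

theorem PresentedGroup.range_eq_closure {α G : Type*} [Group G] {rels : Set (FreeGroup α)}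
    (f : PresentedGroup rels →* G) :
    f.range = Subgroup.closure (Set.range fun a => f (PresentedGroup.of a)) := by
  rw [MonoidHom.range_eq_map, ← PresentedGroup.closure_range_of, MonoidHom.map_closure,
    ← Set.range_comp]
  rfl

section CommutationRelations

open PresentedGroup

variable {α : Type*} (R : α → α → Prop) (Y : Set α)

def commutationRels : Set (FreeGroup α) :=
  {r | ∃ a b, R a b ∧
    r = FreeGroup.of a * FreeGroup.of b * (FreeGroup.of a)⁻¹ * (FreeGroup.of b)⁻¹}

abbrev parabolicRels : Set (FreeGroup Y) :=
  commutationRels fun a b : Y => R a b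

open Classical in
noncomputable def parabolicRetractionGen (a : α) : PresentedGroup (parabolicRels R Y) :=
  if h : a ∈ Y then of ⟨a, h⟩ else 1

theorem parabolicRetractionGen_of_mem (a : Y) : parabolicRetractionGen R Y a = of a :=
  dif_pos a.2

theorem parabolicRetractionGen_of_notMem {a : α} (ha : a ∉ Y) :
    parabolicRetractionGen R Y a = 1 :=
  dif_neg ha

theorem lift_parabolicRetractionGen_eq_one :
    ∀ r ∈ commutationRels R, FreeGroup.lift (parabolicRetractionGen R Y) r = 1 := by
  rintro _ ⟨a, b, hab, rfl⟩
  simp only [map_mul, map_inv, FreeGroup.lift_apply_of]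
  by_cases ha : a ∈ Y
  · by_cases hb : b ∈ Y
    · rw [parabolicRetractionGen_of_mem R Y ⟨a, ha⟩, parabolicRetractionGen_of_mem R Y ⟨b, hb⟩]
      exact one_of_mem ⟨⟨a, ha⟩, ⟨b, hb⟩, hab, rfl⟩
    · simp [parabolicRetractionGen_of_notMem R Y hb]
  · simp [parabolicRetractionGen_of_notMem R Y ha]

noncomputable def parabolicRetraction :
    PresentedGroup (commutationRels R) →* PresentedGroup (parabolicRels R Y) :=
  toGroup (lift_parabolicRetractionGen_eq_one R Y)

theorem parabolicRetraction_leftInverse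
    (f : PresentedGroup (parabolicRels R Y) →* PresentedGroup (commutationRels R))
    (hf : ∀ a : Y, f (of a) = of (a : α)) :
    Function.LeftInverse (parabolicRetraction R Y) f := by
  suffices (parabolicRetraction R Y).comp f = MonoidHom.id _ from DFunLike.congr_fun this
  refine PresentedGroup.ext fun a => ?_
  rw [MonoidHom.comp_apply, hf, parabolicRetraction, toGroup.of,
    parabolicRetractionGen_of_mem, MonoidHom.id_apply]

end CommutationRelations

/-- Parabolic subgroups of Vershik groups are naturally isomorphic to the
corresponding presented groups: the homomorphism `V(Y) → V_n` sending `y_i` to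
`x_i` is injective, and its range is the parabolic subgroup of `V_n` generated
by `{x_i : i ∈ Y}`. -/
theorem vershik_parabolic_presentation (n : ℕ) (Y : Set (Fin n))
    (f : PresentedGroup (VershikSubRels n Y) →* Vershik n)
    (hf : ∀ i : Y, f (PresentedGroup.of i) = xGen n i) :
    Function.Injective f ∧
      f.range = Subgroup.closure {g : Vershik n | ∃ i ∈ Y, g = xGen n i} := by
  let R : Fin n → Fin n → Prop := fun i j => 2 ≤ |(i : ℤ) - (j : ℤ)|
  refine ⟨(parabolicRetraction_leftInverse R Y f hf).injective, ?_⟩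
  rw [PresentedGroup.range_eq_closure]
  congr 1
  ext g
  constructor
  · rintro ⟨i, rfl⟩
    exact ⟨i, i.2, hf i⟩
  · rintro ⟨i, hi, rfl⟩
    exact ⟨⟨i, hi⟩, hf ⟨i, hi⟩⟩
end

section
/- Pseudo-reduction preserves length: let w = (g_1, …, g_N) be any finite word in the generators x_1, …, x_n of the Vershik group V_n and their inverses, and let u ∈ V_n be the element represented by w. Then there exists a subword of w (a sublist obtained by deleting some of the letters g_j, preserving the order of the remaining letters) that also represents u in V_n and whose number of letters equals l(u). -/
/-- The letter (generator `x_i` if `b = true`, its inverse if `b = false`)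
corresponding to the pair `(i, b)`. -/
def letterOf (n : ℕ) (p : Fin n × Bool) : Vershik n :=
  if p.2 then xGen n p.1 else (xGen n p.1)⁻¹

/-!
The Vershik group is the right-angled Artin group of the graph on `Fin n` joining `i` and `j`
when `|i - j| ≥ 2`, and the argument works for every right-angled Artin group. Call a word
reduced when no letter can be moved, across letters it commutes with, next to its inverse.
Deleting such a pair does not change the element, so deleting pairs one at a time leaves a
reduced subword for the same element. Reduced words are geodesic: prepending a letter with the
cancellation it allows (`push`) respects shuffling of adjacent commuting letters, `push a⁻¹`
undoes `push a` on reduced words, and pushes of commuting letters commute up to shuffling. So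
the group acts on reduced words up to shuffling, and evaluating the action at the empty word
shows that all reduced words for an element are shuffles of one another and no longer than any
word for it.
-/

theorem List.append_cons_eq_append_cons {γ : Type*} {p s q t : List γ} {a x : γ}
    (h : p ++ a :: s = q ++ x :: t) :
    (∃ q₂, p = q ++ x :: q₂ ∧ t = q₂ ++ a :: s) ∨ (q = p ∧ x = a ∧ t = s) ∨
      ∃ t₁, q = p ++ a :: t₁ ∧ s = t₁ ++ x :: t := by
  induction p generalizing q with
  | nil =>
    cases q with
    | nil => simp_all
    | cons y q =>
      simp only [List.nil_append, List.cons_append, List.cons.injEq] at h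
      exact .inr (.inr ⟨q, by simp [h.1], h.2⟩)
  | cons z p ih =>
    cases q with
    | nil =>
      simp only [List.cons_append, List.nil_append, List.cons.injEq] at h
      exact .inl ⟨p, by simp [h.1], h.2.symm⟩
    | cons y q =>
      simp only [List.cons_append, List.cons.injEq] at h
      obtain ⟨rfl, h⟩ := h
      simpa using ih h

def RAAG.rels {α : Type*} (G : SimpleGraph α) : Set (FreeGroup α) :=
  {r | ∃ i j, G.Adj i j ∧
    r = FreeGroup.of i * FreeGroup.of j * (FreeGroup.of i)⁻¹ * (FreeGroup.of j)⁻¹}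

abbrev RAAG {α : Type*} (G : SimpleGraph α) : Type _ := PresentedGroup (RAAG.rels G)

open Relation

namespace RAAG

variable {α : Type*}

def invLetter (a : α × Bool) : α × Bool := (a.1, !a.2)

@[simp] lemma invLetter_invLetter (a : α × Bool) : invLetter (invLetter a) = a := by
  simp [invLetter]

@[simp] lemma invLetter_fst (a : α × Bool) : (invLetter a).1 = a.1 := rfl

variable (G : SimpleGraph α)

def Swap (w v : List (α × Bool)) : Prop :=
  ∃ p b c s, G.Adj b.1 c.1 ∧ w = p ++ b :: c :: s ∧ v = p ++ c :: b :: s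

abbrev ShuffleEquiv : List (α × Bool) → List (α × Bool) → Prop := EqvGen (Swap G)

def Cancellable (a : α × Bool) (w : List (α × Bool)) : Prop :=
  ∃ p s, w = p ++ invLetter a :: s ∧ ∀ y ∈ p, G.Adj a.1 y.1

def Reduced (w : List (α × Bool)) : Prop :=
  ∀ p a s, w = p ++ a :: s → ¬ Cancellable G a s

open scoped Classical in
noncomputable def push (a : α × Bool) : List (α × Bool) → List (α × Bool)
  | [] => [a]
  | b :: t => if b = invLetter a then t else if G.Adj a.1 b.1 then b :: push a t else a :: b :: t

noncomputable def normalForm (w : List (α × Bool)) : List (α × Bool) := w.foldr (push G) []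

variable {G}

instance : Trans (ShuffleEquiv G) (ShuffleEquiv G) (ShuffleEquiv G) := ⟨EqvGen.trans _ _ _⟩

lemma ne_invLetter_of_adj {a b : α × Bool} (h : G.Adj a.1 b.1) : b ≠ invLetter a :=
  fun hb => G.ne_of_adj h (by rw [hb, invLetter_fst])

lemma Swap.symm {w v : List (α × Bool)} (h : Swap G w v) : Swap G v w := by
  obtain ⟨p, b, c, s, hbc, rfl, rfl⟩ := h
  exact ⟨p, c, b, s, hbc.symm, rfl, rfl⟩

lemma ShuffleEquiv.length_eq {w v : List (α × Bool)} (h : ShuffleEquiv G w v) :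
    w.length = v.length := by
  induction h with
  | rel _ _ h => obtain ⟨p, b, c, s, -, rfl, rfl⟩ := h; simp
  | refl => rfl
  | symm _ _ _ ih => exact ih.symm
  | trans _ _ _ _ _ ih₁ ih₂ => exact ih₁.trans ih₂

lemma ShuffleEquiv.cons {w v : List (α × Bool)} (x : α × Bool) (h : ShuffleEquiv G w v) :
    ShuffleEquiv G (x :: w) (x :: v) := by
  induction h with
  | rel _ _ h =>
    obtain ⟨p, b, c, s, hbc, rfl, rfl⟩ := h
    exact .rel _ _ ⟨x :: p, b, c, s, hbc, rfl, rfl⟩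
  | refl => exact .refl _
  | symm _ _ _ ih => exact ih.symm
  | trans _ _ _ _ _ ih₁ ih₂ => exact ih₁.trans _ _ _ ih₂

lemma shuffleEquiv_append_cons {a : α × Bool} {p : List (α × Bool)} (t : List (α × Bool))
    (hp : ∀ y ∈ p, G.Adj a.1 y.1) : ShuffleEquiv G (p ++ a :: t) (a :: (p ++ t)) := by
  induction p with
  | nil => exact .refl _
  | cons y p ih =>
    exact ((ih fun z hz => hp z (by simp [hz])).cons y).trans _ _ _
      (.rel _ _ ⟨[], y, a, p ++ t, (hp y (by simp)).symm, rfl, rfl⟩)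

lemma Cancellable.swap {a : α × Bool} {w v : List (α × Bool)} (hs : Swap G w v)
    (h : Cancellable G a w) : Cancellable G a v := by
  obtain ⟨p, b, c, s, hbc, rfl, rfl⟩ := hs
  obtain ⟨q, r, hq, hqa⟩ := h
  rcases List.append_cons_eq_append_cons hq with ⟨q₂, rfl, rfl⟩ | ⟨rfl, rfl, rfl⟩ | ⟨t₁, rfl, hs⟩
  · exact ⟨q, q₂ ++ c :: b :: s, by simp, hqa⟩
  · refine ⟨q ++ [c], s, by simp, fun y hy => ?_⟩
    rcases List.mem_append.1 hy with hy | hy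
    · exact hqa y hy
    · rw [List.mem_singleton.1 hy]; exact hbc
  · cases t₁ with
    | nil =>
      obtain ⟨hc, rfl⟩ : c = invLetter a ∧ s = r := by simpa using hs
      exact ⟨p, b :: s, by rw [hc], fun y hy => hqa y (by simp [hy])⟩
    | cons c' t₁ =>
      obtain ⟨rfl, rfl⟩ : c = c' ∧ s = t₁ ++ invLetter a :: r := by simpa using hs
      refine ⟨p ++ c :: b :: t₁, r, by simp, fun y hy => hqa y ?_⟩
      simp only [List.mem_append, List.mem_cons] at hy ⊢
      tauto

lemma Cancellable.shuffleEquiv {a : α × Bool} {w v : List (α × Bool)}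
    (hs : ShuffleEquiv G w v) : Cancellable G a w ↔ Cancellable G a v := by
  induction hs with
  | rel _ _ h => exact ⟨.swap h, .swap h.symm⟩
  | refl => rfl
  | symm _ _ _ ih => exact ih.symm
  | trans _ _ _ _ _ ih₁ ih₂ => exact ih₁.trans ih₂

lemma cancellable_cons_iff {a b : α × Bool} {w : List (α × Bool)} (h : G.Adj a.1 b.1) :
    Cancellable G a (b :: w) ↔ Cancellable G a w := by
  constructor
  · rintro ⟨_ | ⟨y, p⟩, s, hw, hp⟩
    · exact absurd (List.cons.inj hw).1 (ne_invLetter_of_adj h)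
    · obtain ⟨-, rfl⟩ := List.cons.inj hw
      exact ⟨p, s, rfl, fun z hz => hp z (by simp [hz])⟩
  · rintro ⟨p, s, rfl, hp⟩
    refine ⟨b :: p, s, rfl, fun y hy => ?_⟩
    rcases List.mem_cons.1 hy with rfl | hy
    · exact h
    · exact hp y hy

@[simp] lemma push_cons_invLetter (a : α × Bool) (w : List (α × Bool)) :
    push G a (invLetter a :: w) = w := by
  simp [push]

@[simp] lemma push_invLetter_cons (a : α × Bool) (w : List (α × Bool)) :
    push G (invLetter a) (a :: w) = w := by
  simpa using push_cons_invLetter (G := G) (invLetter a) w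

lemma push_cons_of_adj {a b : α × Bool} (w : List (α × Bool)) (h : G.Adj a.1 b.1) :
    push G a (b :: w) = b :: push G a w := by
  simp [push, ne_invLetter_of_adj h, h]

lemma push_append_of_adj {a : α × Bool} {p : List (α × Bool)} (w : List (α × Bool))
    (hp : ∀ y ∈ p, G.Adj a.1 y.1) : push G a (p ++ w) = p ++ push G a w := by
  induction p with
  | nil => rfl
  | cons y p ih =>
    rw [List.cons_append, push_cons_of_adj _ (hp y (by simp)), ih fun z hz => hp z (by simp [hz]),
      List.cons_append]

lemma Cancellable.exists_shuffleEquiv {a : α × Bool} {w : List (α × Bool)}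
    (h : Cancellable G a w) : ∃ w', ShuffleEquiv G w (invLetter a :: w') ∧ push G a w = w' := by
  obtain ⟨p, s, rfl, hp⟩ := h
  refine ⟨p ++ s, shuffleEquiv_append_cons s hp, ?_⟩
  rw [push_append_of_adj _ hp, push_cons_invLetter]

lemma exists_push_eq_of_not_cancellable {a : α × Bool} {w : List (α × Bool)}
    (h : ¬ Cancellable G a w) :
    ∃ p s, w = p ++ s ∧ (∀ y ∈ p, G.Adj a.1 y.1) ∧ push G a w = p ++ a :: s := by
  induction w with
  | nil => exact ⟨[], [], rfl, by simp, rfl⟩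
  | cons b t ih =>
    by_cases hb : b = invLetter a
    · exact absurd ⟨[], t, by rw [hb]; rfl, by simp⟩ h
    by_cases hab : G.Adj a.1 b.1
    · obtain ⟨p, s, rfl, hp, hpush⟩ := ih ((cancellable_cons_iff hab).not.1 h)
      refine ⟨b :: p, s, rfl, ?_, by rw [push_cons_of_adj _ hab, hpush, List.cons_append]⟩
      rintro y (_ | ⟨_, hy⟩)
      exacts [hab, hp y hy]
    · exact ⟨[], b :: t, rfl, by simp, by simp [push, hb, hab]⟩

lemma push_shuffleEquiv_cons {a : α × Bool} {w : List (α × Bool)} (h : ¬ Cancellable G a w) :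
    ShuffleEquiv G (push G a w) (a :: w) := by
  obtain ⟨p, s, rfl, hp, hpush⟩ := exists_push_eq_of_not_cancellable h
  exact hpush ▸ shuffleEquiv_append_cons s hp

lemma push_swap (a : α × Bool) {w v : List (α × Bool)} (h : Swap G w v) :
    ShuffleEquiv G (push G a w) (push G a v) := by
  obtain ⟨p, b, c, s, hbc, rfl, rfl⟩ := h
  induction p with
  | nil =>
    simp only [List.nil_append]
    by_cases hb : b = invLetter a
    · subst hb
      rw [push_cons_invLetter, push_cons_of_adj (a := a) _ hbc, push_cons_invLetter]
      exact .refl _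
    by_cases hc : c = invLetter a
    · subst hc
      rw [push_cons_invLetter, push_cons_of_adj (a := a) _ hbc.symm, push_cons_invLetter]
      exact .refl _
    have swap₀ {x y : α × Bool} (t : List (α × Bool)) (hxy : G.Adj x.1 y.1) :
        ShuffleEquiv G (x :: y :: t) (y :: x :: t) := .rel _ _ ⟨[], x, y, t, hxy, rfl, rfl⟩
    by_cases hab : G.Adj a.1 b.1 <;> by_cases hac : G.Adj a.1 c.1 <;>
      simp only [push, if_neg hb, if_neg hc, hab, hac, if_true, if_false]
    · exact swap₀ _ hbc
    · exact (swap₀ _ hab.symm).trans _ _ _ ((swap₀ _ hbc).cons a)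
    · exact ((swap₀ _ hbc).cons a).trans _ _ _ (swap₀ _ hac)
    · exact (swap₀ _ hbc).cons a
  | cons x p ih =>
    simp only [List.cons_append]
    by_cases hx : x = invLetter a
    · subst hx
      simp only [push_cons_invLetter]
      exact .rel _ _ ⟨p, b, c, s, hbc, rfl, rfl⟩
    by_cases hax : G.Adj a.1 x.1
    · simp only [push_cons_of_adj _ hax]
      exact ih.cons x
    · simp only [push, if_neg hx, if_neg hax]
      exact .rel _ _ ⟨a :: x :: p, b, c, s, hbc, rfl, rfl⟩

lemma push_shuffleEquiv (a : α × Bool) {w v : List (α × Bool)} (h : ShuffleEquiv G w v) :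
    ShuffleEquiv G (push G a w) (push G a v) := by
  induction h with
  | rel _ _ h => exact push_swap a h
  | refl => exact .refl _
  | symm _ _ _ ih => exact ih.symm
  | trans _ _ _ _ _ ih₁ ih₂ => exact ih₁.trans _ _ _ ih₂

lemma reduced_nil : Reduced G [] := by
  rintro (_ | _) _ _ ⟨⟩

lemma Reduced.tail {x : α × Bool} {w : List (α × Bool)} (h : Reduced G (x :: w)) :
    Reduced G w := fun p a s hw => h (x :: p) a s (by simp [hw])

lemma Reduced.cons {a : α × Bool} {w : List (α × Bool)} (hw : Reduced G w)
    (ha : ¬ Cancellable G a w) : Reduced G (a :: w) := by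
  rintro (_ | ⟨y, p⟩) x s h <;> obtain ⟨rfl, rfl⟩ := List.cons.inj h
  exacts [ha, hw p x s rfl]

lemma Reduced.swap {w v : List (α × Bool)} (hs : Swap G w v) (hw : Reduced G w) :
    Reduced G v := by
  obtain ⟨p, b, c, s, hbc, rfl, rfl⟩ := hs
  intro q x t hq hx
  rcases List.append_cons_eq_append_cons hq with ⟨q₂, rfl, rfl⟩ | ⟨rfl, rfl, rfl⟩ | ⟨t₁, rfl, hs⟩
  · exact hw q x (q₂ ++ b :: c :: s) (by simp) (hx.swap ⟨q₂, c, b, s, hbc.symm, rfl, rfl⟩)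
  · exact hw (q ++ [b]) x s (by simp) ((cancellable_cons_iff hbc.symm).1 hx)
  · cases t₁ with
    | nil =>
      obtain ⟨rfl, rfl⟩ : b = x ∧ s = t := by simpa using hs
      exact hw p b (c :: s) rfl ((cancellable_cons_iff hbc).2 hx)
    | cons b' t₁ =>
      obtain ⟨rfl, rfl⟩ : b = b' ∧ s = t₁ ++ x :: t := by simpa using hs
      exact hw (p ++ b :: c :: t₁) x t (by simp) hx

lemma Reduced.shuffleEquiv {w v : List (α × Bool)} (hs : ShuffleEquiv G w v) :
    Reduced G w ↔ Reduced G v := by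
  induction hs with
  | rel _ _ h => exact ⟨.swap h, .swap h.symm⟩
  | refl => rfl
  | symm _ _ _ ih => exact ih.symm
  | trans _ _ _ _ _ ih₁ ih₂ => exact ih₁.trans ih₂

lemma Reduced.push {w : List (α × Bool)} (hw : Reduced G w) (a : α × Bool) :
    Reduced G (push G a w) := by
  by_cases ha : Cancellable G a w
  · obtain ⟨w', hw', rfl⟩ := ha.exists_shuffleEquiv
    exact ((Reduced.shuffleEquiv hw').1 hw).tail
  · exact (Reduced.shuffleEquiv (push_shuffleEquiv_cons ha)).2 (hw.cons ha)

lemma push_invLetter_push {r : List (α × Bool)} (hr : Reduced G r) (a : α × Bool) :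
    ShuffleEquiv G (push G (invLetter a) (push G a r)) r := by
  by_cases ha : Cancellable G a r
  · obtain ⟨r', hr', hpush⟩ := ha.exists_shuffleEquiv
    rw [hpush]
    have hr'' : ¬ Cancellable G (invLetter a) r' := fun h => by
      obtain ⟨r'', hr'', -⟩ := h.exists_shuffleEquiv
      rw [invLetter_invLetter] at hr''
      exact (Reduced.shuffleEquiv (hr'.trans _ _ _ (hr''.cons _))).1 hr [] _ _ rfl
        ⟨[], r'', by simp, by simp⟩
    exact (push_shuffleEquiv_cons hr'').trans _ _ _ hr'.symm
  · obtain ⟨p, s, rfl, hp, hpush⟩ := exists_push_eq_of_not_cancellable ha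
    rw [hpush, push_append_of_adj (a := invLetter a) _ hp, push_invLetter_cons]
    exact .refl _

lemma push_push_of_cancellable {a b : α × Bool} {t : List (α × Bool)} (hab : G.Adj a.1 b.1)
    (ha : Cancellable G a t) : ShuffleEquiv G (push G a (push G b t)) (push G b (push G a t)) := by
  obtain ⟨t', ht, -⟩ := ha.exists_shuffleEquiv
  calc ShuffleEquiv G (push G a (push G b t)) (push G a (push G b (invLetter a :: t'))) :=
        push_shuffleEquiv a (push_shuffleEquiv b ht)
    _ = push G b (push G a (invLetter a :: t')) := by
        rw [push_cons_of_adj (a := b) (b := invLetter a) _ hab.symm, push_cons_invLetter,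
          push_cons_invLetter]
    ShuffleEquiv G _ (push G b (push G a t)) :=
        (push_shuffleEquiv b (push_shuffleEquiv a ht)).symm

lemma push_push_comm {a b : α × Bool} (t : List (α × Bool)) (hab : G.Adj a.1 b.1) :
    ShuffleEquiv G (push G a (push G b t)) (push G b (push G a t)) := by
  by_cases ha : Cancellable G a t
  · exact push_push_of_cancellable hab ha
  by_cases hb : Cancellable G b t
  · exact (push_push_of_cancellable hab.symm hb).symm
  calc ShuffleEquiv G (push G a (push G b t)) (push G a (b :: t)) :=
        push_shuffleEquiv a (push_shuffleEquiv_cons hb)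
    _ = b :: push G a t := push_cons_of_adj _ hab
    ShuffleEquiv G _ (b :: a :: t) := (push_shuffleEquiv_cons ha).cons b
    ShuffleEquiv G _ (a :: b :: t) := .rel _ _ ⟨[], b, a, t, hab.symm, rfl, rfl⟩
    ShuffleEquiv G _ (a :: push G b t) := ((push_shuffleEquiv_cons hb).cons a).symm
    _ = push G b (a :: t) := (push_cons_of_adj _ hab.symm).symm
    ShuffleEquiv G _ (push G b (push G a t)) :=
        push_shuffleEquiv b (push_shuffleEquiv_cons ha).symm

@[simp] lemma normalForm_cons (a : α × Bool) (w : List (α × Bool)) :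
    normalForm G (a :: w) = push G a (normalForm G w) := rfl

lemma length_push_le (a : α × Bool) (w : List (α × Bool)) :
    (push G a w).length ≤ w.length + 1 := by
  induction w with
  | nil => simp [push]
  | cons b t ih =>
    unfold push
    split_ifs <;> simp only [List.length_cons] <;> omega

lemma length_normalForm_le (w : List (α × Bool)) : (normalForm G w).length ≤ w.length := by
  induction w with
  | nil => rfl
  | cons a w ih => simpa using (length_push_le a _).trans (Nat.succ_le_succ ih)

lemma reduced_normalForm (w : List (α × Bool)) : Reduced G (normalForm G w) := by
  induction w with
  | nil => exact reduced_nil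
  | cons a w ih => exact ih.push a

lemma Reduced.normalForm_shuffleEquiv {w : List (α × Bool)} (hw : Reduced G w) :
    ShuffleEquiv G (normalForm G w) w := by
  induction w with
  | nil => exact .refl _
  | cons a w ih =>
    have ha : ¬ Cancellable G a (normalForm G w) :=
      fun h => hw [] a w rfl ((Cancellable.shuffleEquiv (ih hw.tail)).1 h)
    exact (push_shuffleEquiv_cons ha).trans _ _ _ ((ih hw.tail).cons a)

variable (G)

def letter (a : α × Bool) : RAAG G :=
  if a.2 then PresentedGroup.of a.1 else (PresentedGroup.of a.1)⁻¹

def wordProd (w : List (α × Bool)) : RAAG G := (w.map (letter G)).prod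

variable {G}

@[simp] lemma wordProd_cons (a : α × Bool) (w : List (α × Bool)) :
    wordProd G (a :: w) = letter G a * wordProd G w := by
  simp [wordProd]

@[simp] lemma wordProd_append (w v : List (α × Bool)) :
    wordProd G (w ++ v) = wordProd G w * wordProd G v := by
  simp [wordProd]

@[simp] lemma letter_invLetter (a : α × Bool) : letter G (invLetter a) = (letter G a)⁻¹ := by
  obtain ⟨i, _ | _⟩ := a <;> simp [letter, invLetter]

lemma commute_of_adj {i j : α} (h : G.Adj i j) :
    Commute (PresentedGroup.of i : RAAG G) (PresentedGroup.of j) := by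
  have hr : FreeGroup.of i * FreeGroup.of j * (FreeGroup.of i)⁻¹ * (FreeGroup.of j)⁻¹ ∈ rels G :=
    ⟨i, j, h, rfl⟩
  rw [← commutatorElement_eq_one_iff_commute]
  exact (QuotientGroup.eq_one_iff _).2 (Subgroup.subset_normalClosure hr)

lemma commute_letter {a b : α × Bool} (h : G.Adj a.1 b.1) :
    Commute (letter G a) (letter G b) := by
  have hc := commute_of_adj h
  obtain ⟨i, _ | _⟩ := a <;> obtain ⟨j, _ | _⟩ := b <;> simp only [letter, if_true]
  exacts [hc.inv_inv, hc.inv_left, hc.inv_right, hc]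

lemma commute_letter_wordProd {a : α × Bool} {p : List (α × Bool)}
    (hp : ∀ y ∈ p, G.Adj a.1 y.1) : Commute (letter G a) (wordProd G p) :=
  Commute.list_prod_right _ _ fun _ hx => by
    obtain ⟨y, hy, rfl⟩ := List.mem_map.1 hx
    exact commute_letter (hp y hy)

lemma wordProd_erase_cancellable (p : List (α × Bool)) {a : α × Bool} {m : List (α × Bool)}
    (r : List (α × Bool)) (hm : ∀ y ∈ m, G.Adj a.1 y.1) :
    wordProd G (p ++ a :: (m ++ invLetter a :: r)) = wordProd G (p ++ m ++ r) := by
  simp only [wordProd_append, wordProd_cons, letter_invLetter, ← mul_assoc,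
    (commute_letter_wordProd hm).eq, mul_inv_cancel_right]

lemma wordProd_push (a : α × Bool) (w : List (α × Bool)) :
    wordProd G (push G a w) = letter G a * wordProd G w := by
  by_cases ha : Cancellable G a w
  · obtain ⟨p, s, rfl, hp⟩ := ha
    rw [push_append_of_adj _ hp, push_cons_invLetter]
    simpa using (wordProd_erase_cancellable [] s hp).symm
  · obtain ⟨p, s, rfl, hp, hpush⟩ := exists_push_eq_of_not_cancellable ha
    simp only [hpush, wordProd_append, wordProd_cons, ← mul_assoc,
      (commute_letter_wordProd hp).eq]

@[simp] lemma wordProd_normalForm (w : List (α × Bool)) :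
    wordProd G (normalForm G w) = wordProd G w := by
  induction w with
  | nil => rfl
  | cons a w ih => rw [normalForm_cons, wordProd_push, ih, wordProd_cons]

variable (G) in
def reducedSetoid : Setoid {w : List (α × Bool) // Reduced G w} :=
  (EqvGen.setoid (Swap G)).comap Subtype.val

variable (G) in
abbrev ReducedTrace : Type _ := Quotient (reducedSetoid G)

noncomputable def pushTrace (a : α × Bool) : ReducedTrace G → ReducedTrace G :=
  Quotient.map (fun w => ⟨push G a w, w.2.push a⟩) fun _ _ h => push_shuffleEquiv a h

lemma pushTrace_invLetter_pushTrace (a : α × Bool) (x : ReducedTrace G) :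
    pushTrace (invLetter a) (pushTrace a x) = x :=
  Quotient.inductionOn x fun w => Quotient.sound (push_invLetter_push w.2 a)

noncomputable def pushPerm (a : α × Bool) : Equiv.Perm (ReducedTrace G) where
  toFun := pushTrace a
  invFun := pushTrace (invLetter a)
  left_inv := pushTrace_invLetter_pushTrace a
  right_inv x := by simpa using pushTrace_invLetter_pushTrace (invLetter a) x

lemma pushPerm_invLetter (a : α × Bool) :
    pushPerm (G := G) (invLetter a) = (pushPerm a)⁻¹ :=
  Equiv.ext fun _ => rfl

lemma commute_pushPerm {a b : α × Bool} (h : G.Adj a.1 b.1) :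
    Commute (pushPerm (G := G) a) (pushPerm b) :=
  Equiv.ext fun x => Quotient.inductionOn x fun w => Quotient.sound (push_push_comm w.1 h)

variable (G) in
noncomputable def toPerm : RAAG G →* Equiv.Perm (ReducedTrace G) :=
  PresentedGroup.toGroup (f := fun i => pushPerm (i, true)) <| by
    rintro _ ⟨i, j, h, rfl⟩
    simpa [mul_inv_eq_one, mul_inv_eq_iff_eq_mul] using (commute_pushPerm (b := (j, true)) h).eq

lemma toPerm_letter (a : α × Bool) : toPerm G (letter G a) = pushPerm a := by
  obtain ⟨i, _ | _⟩ := a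
  · change toPerm G (PresentedGroup.of i)⁻¹ = pushPerm (invLetter (i, true))
    rw [pushPerm_invLetter, map_inv, toPerm, PresentedGroup.toGroup.of]
  · exact PresentedGroup.toGroup.of _

lemma toPerm_wordProd (w : List (α × Bool)) :
    toPerm G (wordProd G w) ⟦⟨[], reduced_nil⟩⟧ = ⟦⟨normalForm G w, reduced_normalForm w⟩⟧ := by
  induction w with
  | nil => rfl
  | cons a w ih => rw [wordProd_cons, map_mul, Equiv.Perm.mul_apply, ih, toPerm_letter]; rfl

theorem normalForm_shuffleEquiv_of_wordProd_eq {v w : List (α × Bool)}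
    (h : wordProd G v = wordProd G w) : ShuffleEquiv G (normalForm G v) (normalForm G w) :=
  Quotient.exact <| (toPerm_wordProd v).symm.trans (h ▸ toPerm_wordProd w)

theorem Reduced.length_normalForm {w : List (α × Bool)} (hw : Reduced G w) :
    (normalForm G w).length = w.length :=
  hw.normalForm_shuffleEquiv.length_eq

theorem length_normalForm_le_of_wordProd_eq {v w : List (α × Bool)}
    (h : wordProd G v = wordProd G w) : (normalForm G w).length ≤ v.length := by
  rw [← (normalForm_shuffleEquiv_of_wordProd_eq h).length_eq]
  exact length_normalForm_le v

theorem exists_reduced_sublist (w : List (α × Bool)) :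
    ∃ w', w'.Sublist w ∧ Reduced G w' ∧ wordProd G w' = wordProd G w := by
  by_cases hw : Reduced G w
  · exact ⟨w, .refl w, hw, rfl⟩
  simp only [Reduced, not_forall, not_not] at hw
  obtain ⟨p, a, s, rfl, m, r, rfl, hm⟩ := hw
  obtain ⟨w', hsub, hred, hprod⟩ := exists_reduced_sublist (p ++ m ++ r)
  refine ⟨w', hsub.trans ?_, hred, hprod.trans (wordProd_erase_cancellable p r hm).symm⟩
  simp [(((List.sublist_cons_self _ r).append_left m).cons a).append_left p]
termination_by w.length

end RAAG

open RAAG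

def vershikGraph (n : ℕ) : SimpleGraph (Fin n) where
  Adj i j := 2 ≤ |(i : ℤ) - j|
  symm := ⟨fun _ _ h => by rwa [abs_sub_comm]⟩
  loopless := ⟨fun _ h => by simp at h⟩

lemma wordProd_vershikGraph {n : ℕ} (w : List (Fin n × Bool)) :
    wordProd (vershikGraph n) w = (w.map (letterOf n)).prod := rfl

lemma isLetter_iff_mem_range {n : ℕ} {g : Vershik n} :
    IsLetter n g ↔ g ∈ Set.range (letterOf n) := by
  constructor
  · rintro ⟨i, rfl | rfl⟩
    exacts [⟨(i, true), rfl⟩, ⟨(i, false), rfl⟩]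
  · rintro ⟨⟨i, _ | _⟩, rfl⟩
    exacts [⟨i, .inr rfl⟩, ⟨i, .inl rfl⟩]

lemma vLength_wordProd {n : ℕ} (w : List (Fin n × Bool)) :
    vLength (wordProd (vershikGraph n) w) = (normalForm (vershikGraph n) w).length := by
  have hmem : (normalForm (vershikGraph n) w).length ∈ {k | ∃ L : List (Vershik n),
      L.length = k ∧ (∀ g ∈ L, IsLetter n g) ∧ L.prod = wordProd (vershikGraph n) w} :=
    ⟨(normalForm (vershikGraph n) w).map (letterOf n), List.length_map _, fun g hg => by
      obtain ⟨a, -, rfl⟩ := List.mem_map.1 hg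
      exact isLetter_iff_mem_range.2 ⟨a, rfl⟩,
      by rw [← wordProd_vershikGraph, wordProd_normalForm]⟩
  refine le_antisymm (Nat.sInf_le hmem) (le_csInf ⟨_, hmem⟩ ?_)
  rintro k ⟨L, rfl, hL, hprod⟩
  obtain ⟨v, rfl⟩ : L ∈ Set.range (List.map (letterOf n)) := by
    rw [Set.range_list_map]
    exact fun g hg => isLetter_iff_mem_range.1 (hL g hg)
  simpa using length_normalForm_le_of_wordProd_eq (G := vershikGraph n) hprod

/-- Pseudo-reduction preserves length: any word `w` in the generators of `V_n` and
their inverses has a subword (a sublist, preserving the order of the remaining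
letters) representing the same element `u` of `V_n` and consisting of exactly
`l(u)` letters. -/
theorem vershik_pseudo_reduction (n : ℕ) (w : List (Fin n × Bool)) (u : Vershik n)
    (hu : (w.map (letterOf n)).prod = u) :
    ∃ w' : List (Fin n × Bool), w'.Sublist w ∧
      (w'.map (letterOf n)).prod = u ∧ w'.length = vLength u := by
  subst hu
  obtain ⟨w', hsub, hred, hprod⟩ := exists_reduced_sublist (G := vershikGraph n) w
  refine ⟨w', hsub, hprod, ?_⟩
  rw [← wordProd_vershikGraph, ← hprod, vLength_wordProd, hred.length_normalForm]
end
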